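/- arXiv:1207.7291 — 4 statements merged into one kernel-verified Lean document; each statement's English description precedes it below -/
import Mathlib

section
/- For every prime p < 41 and every integer x, x² + x + 41 is not divisible by p. -/
/-!
Completing the square, `p ∣ x ^ 2 + x + 41` means `(2x + 1) ^ 2 ≡ -163 (mod p)`, and `-163` is a
quadratic non-residue modulo every odd prime below `41` (while `x ^ 2 + x + 41` is always odd).
This makes the theorem a finite check of the residues in each `ZMod p`.
-/

theorem Int.natCast_dvd_sq_add_self_add_iff (n : ℕ) (x c : ℤ) :
    (n : ℤ) ∣ x ^ 2 + x + c ↔ (x : ZMod n) ^ 2 + x + c = 0 := by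
  rw [← ZMod.intCast_zmod_eq_zero_iff_dvd]
  push_cast
  rfl

theorem ZMod.sq_add_self_add_41_ne_zero {p : ℕ} (hp : p.Prime) (hlt : p < 41) (y : ZMod p) :
    y ^ 2 + y + 41 ≠ 0 := by
  revert y
  interval_cases p <;> norm_num at hp <;> decide

theorem stmt_3 : ∀ p : ℕ, p.Prime → p < 41 → ∀ x : ℤ, ¬ (p : ℤ) ∣ x ^ 2 + x + 41 := by
  intro p hp hlt x
  rw [Int.natCast_dvd_sq_add_self_add_iff]
  exact_mod_cast ZMod.sq_add_self_add_41_ne_zero hp hlt x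
end

section
/- Let N > 1 be odd and write N − 1 = F·R with F even, F³ > N/2, and suppose for each prime p dividing F there exists an integer a with a^(N−1) ≡ 1 (mod N) and gcd(a^((N−1)/p) − 1, N) = 1. If, writing R = 2Fq + r with 1 ≤ r < 2F, either q = 0 or r² − 8q is not a perfect square, then N is prime. -/
/-!
For each prime `p ∣ F`, the witness `a` has order modulo any prime `ℓ ∣ N` dividing `N - 1` but
not `(N - 1) / p`, so the full `p`-part of `N - 1` divides `ℓ - 1`. Hence every divisor of `N` is
`≡ 1` modulo `G = lcm(F, 2^ν₂(N - 1))`, and `(N - 1) / G` is odd. A nontrivial factorization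
`N = (G m + 1)(G m' + 1)` with `G = c F` then forces `m m'` to be even, and `F³ > N / 2` gives
`c² m m' < 2 F`. So `R = c (G m m' + m + m')` has base-`2F` digits `q = c² m m' / 2 ≠ 0` and
`r = c (m + m')`, and `r² - 8 q = (c (m - m'))²` is a square.
-/

namespace Nat

theorem ordProj_dvd_of_dvd_of_not_dvd_div {n d p : ℕ} (hp : p.Prime) (hd : d ∣ n)
    (hnd : ¬ d ∣ n / p) : p ^ n.factorization p ∣ d := by
  obtain ⟨e, rfl⟩ := hd
  have hpe : ¬ p ∣ e := by
    rintro ⟨f, rfl⟩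
    exact hnd ⟨f, by rw [mul_left_comm, Nat.mul_div_cancel_left _ hp.pos]⟩
  exact ((hp.coprime_iff_not_dvd.2 hpe).pow_left _).dvd_of_dvd_mul_right (ordProj_dvd _ _)

theorem not_mul_dvd_of_ordProj_dvd {n d p : ℕ} (hp : p.Prime) (hn : n ≠ 0)
    (hd : p ^ n.factorization p ∣ d) : ¬ p * d ∣ n := fun h =>
  pow_succ_factorization_not_dvd hn hp
    (by simpa [_root_.pow_succ'] using (mul_dvd_mul_left p hd).trans h)

theorem dvd_of_forall_ordProj_dvd {F n m : ℕ} (hF : F ∣ n) (hn : n ≠ 0)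
    (h : ∀ p, p.Prime → p ∣ F → p ^ n.factorization p ∣ m) : F ∣ m := by
  refine (dvd_iff_prime_pow_dvd_dvd m F).2 fun p k hp hpk => ?_
  rcases k.eq_zero_or_pos with rfl | hk
  · exact one_dvd m
  have hkn : k ≤ n.factorization p := (hp.pow_dvd_iff_le_factorization hn).1 (hpk.trans hF)
  exact (pow_dvd_pow p hkn).trans (h p hp ((dvd_pow_self p hk.ne').trans hpk))

theorem Prime.ordProj_dvd_sub_one {N ℓ p : ℕ} {a : ℤ} (hℓ : ℓ.Prime) (hℓN : ℓ ∣ N)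
    (hp : p.Prime) (ha : a ^ (N - 1) ≡ 1 [ZMOD N])
    (hgcd : Int.gcd (a ^ ((N - 1) / p) - 1) N = 1) :
    p ^ (N - 1).factorization p ∣ ℓ - 1 := by
  have := Fact.mk hℓ
  rcases eq_or_ne (N - 1) 0 with hN | hN
  · simp [hN]
  have hℓN' : (ℓ : ℤ) ∣ N := Int.natCast_dvd_natCast.2 hℓN
  have hx : (a : ZMod ℓ) ^ (N - 1) = 1 := by
    exact_mod_cast (ZMod.intCast_eq_intCast_iff _ _ ℓ).2 (ha.of_dvd hℓN')
  have hx0 : (a : ZMod ℓ) ≠ 0 := fun h0 => by simp [h0, hN] at hx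
  refine (ordProj_dvd_of_dvd_of_not_dvd_div hp (orderOf_dvd_of_pow_eq_one hx) fun hdvd => ?_).trans
    (ZMod.orderOf_dvd_card_sub_one hx0)
  have hℓa : (ℓ : ℤ) ∣ a ^ ((N - 1) / p) - 1 := by
    rw [← ZMod.intCast_zmod_eq_zero_iff_dvd]
    push_cast
    rw [orderOf_dvd_iff_pow_eq_one.1 hdvd, sub_self]
  have := Int.dvd_coe_gcd hℓa hℓN'
  rw [hgcd] at this
  exact hℓ.one_lt.ne' (by exact_mod_cast Int.eq_one_of_dvd_one (by positivity) this)

theorem lcm_ordProj_two_dvd_sub_one {N F ℓ : ℕ} (hN : N - 1 ≠ 0) (hFN : F ∣ N - 1) (hF : 2 ∣ F)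
    (hℓ : ℓ.Prime) (hℓN : ℓ ∣ N)
    (hdiv : ∀ p : ℕ, p.Prime → p ∣ F →
      ∃ a : ℤ, a ^ (N - 1) ≡ 1 [ZMOD (N : ℤ)] ∧ Int.gcd (a ^ ((N - 1) / p) - 1) (N : ℤ) = 1) :
    F.lcm (2 ^ (N - 1).factorization 2) ∣ ℓ - 1 := by
  have hpow (p : ℕ) (hp : p.Prime) (hpF : p ∣ F) : p ^ (N - 1).factorization p ∣ ℓ - 1 := by
    obtain ⟨a, ha, hgcd⟩ := hdiv p hp hpF
    exact hℓ.ordProj_dvd_sub_one hℓN hp ha hgcd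
  exact lcm_dvd (dvd_of_forall_ordProj_dvd hFN hN hpow) (hpow 2 prime_two hF)

theorem one_modEq_of_dvd_of_forall_prime {G N B : ℕ} (hN : N ≠ 0)
    (h : ∀ ℓ, ℓ.Prime → ℓ ∣ N → 1 ≡ ℓ [MOD G]) (hB : B ∣ N) : 1 ≡ B [MOD G] := by
  induction B using recOnMul with
  | zero => exact absurd (eq_zero_of_zero_dvd hB) hN
  | one => rfl
  | prime ℓ hℓ => exact h ℓ hℓ hB
  | mul a b ha hb =>
    simpa using (ha (dvd_of_mul_right_dvd hB)).mul (hb (dvd_of_mul_left_dvd hB))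

theorem exists_eq_mul_add_one_mul_mul_add_one {N G : ℕ} (hN : 1 < N) (hNp : ¬ N.Prime)
    (h : ∀ ℓ, ℓ.Prime → ℓ ∣ N → 1 ≡ ℓ [MOD G]) :
    ∃ m m', 0 < m ∧ 0 < m' ∧ N = (G * m + 1) * (G * m' + 1) := by
  obtain ⟨A, ⟨B, hAB⟩, hA, hAN⟩ := exists_dvd_of_not_prime2 hN hNp
  have hB : 1 < B := by
    by_contra! hB
    interval_cases B <;> omega
  have hmod (D : ℕ) (hD : 1 < D) (hDN : D ∣ N) : ∃ m, 0 < m ∧ D = G * m + 1 := by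
    obtain ⟨m, hm⟩ := (modEq_iff_dvd' hD.le).1 (one_modEq_of_dvd_of_forall_prime (by omega) h hDN)
    exact ⟨m, pos_of_ne_zero (by rintro rfl; omega), by omega⟩
  obtain ⟨m, hm, rfl⟩ := hmod A hA ⟨B, hAB⟩
  obtain ⟨m', hm', rfl⟩ := hmod B hB (Dvd.intro_left _ hAB.symm)
  exact ⟨m, m', hm, hm', hAB⟩

theorem even_mul_of_odd_mul_mul_add_add {G m m' : ℕ} (hG : Even G)
    (h : Odd (G * m * m' + m + m')) : Even (m * m') := by
  rw [add_assoc, odd_add'] at h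
  have hsum := h.2 ((hG.mul_right m).mul_right m')
  rw [even_mul]
  rcases even_or_odd m with hm | hm
  · exact .inl hm
  · exact .inr (by simpa [odd_add, hm] using hsum)

theorem mul_add_le_sq_mul_mul_add_one {c m m' : ℕ} (hc : 0 < c) (hm : 0 < m) (hm' : 0 < m') :
    c * (m + m') ≤ c ^ 2 * (m * m') + 1 := by
  have h1 : m + m' ≤ m * m' + 1 := by nlinarith
  have h2 : c ≤ c * (m * m') := Nat.le_mul_of_pos_right c (mul_pos hm hm')
  nlinarith

theorem quot_rem_of_mul_mul_add_add_eq {F c m m' h q r : ℕ} (hc : 0 < c) (hm : 0 < m)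
    (hm' : 0 < m') (hh : m * m' = 2 * h) (hlt : c ^ 2 * (m * m') < 2 * F)
    (hR : c * (F * c * m * m' + m + m') = 2 * F * q + r) (hr : r < 2 * F) :
    q = c ^ 2 * h ∧ r = c * (m + m') := by
  have hle := mul_add_le_sq_mul_mul_add_one hc hm hm'
  rw [hh, show c ^ 2 * (2 * h) = 2 * (c ^ 2 * h) by ring] at hle hlt
  have hR' : c * (m + m') + 2 * F * (c ^ 2 * h) = 2 * F * q + r := by
    rw [← hR, show F * c * m * m' = F * c * (m * m') by ring, hh]
    ring
  have hF : 0 < 2 * F := by omega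
  -- `c (m + m') ≤ c² m m' + 1`, an odd number below the even `2 F`.
  have h1 := (Nat.div_mod_unique hF).2 ⟨hR', by omega⟩
  have h2 : (2 * F * q + r) / (2 * F) = q ∧ (2 * F * q + r) % (2 * F) = r :=
    (Nat.div_mod_unique hF).2 ⟨add_comm _ _, hr⟩
  exact ⟨h2.1.symm.trans h1.1, h2.2.symm.trans h1.2⟩

end Nat

theorem stmt_13_general (N F R q r : ℕ) (hN : 1 < N)
    (hFR : N - 1 = F * R) (hFeven : Even F)
    (hF3 : ((F : ℚ)) ^ 3 > (N : ℚ) / 2)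
    (hdiv : ∀ p : ℕ, p.Prime → p ∣ F →
      ∃ a : ℤ, a ^ (N - 1) ≡ 1 [ZMOD (N : ℤ)] ∧
        Int.gcd (a ^ ((N - 1) / p) - 1) (N : ℤ) = 1)
    (hqr : R = 2 * F * q + r) (hr2 : r < 2 * F)
    (hsq : q = 0 ∨ ¬ ∃ s : ℤ, s ^ 2 = (r : ℤ) ^ 2 - 8 * q) :
    N.Prime := by
  by_contra hNp
  have hN1 : N - 1 ≠ 0 := by omega
  have hF : 0 < F := Nat.pos_of_ne_zero fun hF => hN1 (by simp [hFR, hF])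
  obtain ⟨G, hGℓ, hG2, c, rfl⟩ : ∃ G, (∀ ℓ, ℓ.Prime → ℓ ∣ N → 1 ≡ ℓ [MOD G]) ∧
      ¬ 2 * G ∣ N - 1 ∧ F ∣ G :=
    ⟨_, fun ℓ hℓ hℓN => (Nat.modEq_iff_dvd' hℓ.one_le).2 <|
        Nat.lcm_ordProj_two_dvd_sub_one hN1 ⟨R, hFR⟩ hFeven.two_dvd hℓ hℓN hdiv,
      Nat.not_mul_dvd_of_ordProj_dvd Nat.prime_two hN1 (Nat.dvd_lcm_right _ _),
      Nat.dvd_lcm_left _ _⟩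
  obtain ⟨m, m', hm, hm', hNmm⟩ := Nat.exists_eq_mul_add_one_mul_mul_add_one hN hNp hGℓ
  have hNG : N - 1 = F * c * (F * c * m * m' + m + m') := by
    rw [hNmm, show (F * c * m + 1) * (F * c * m' + 1) = F * c * (F * c * m * m' + m + m') + 1 by
      ring]
    rfl
  have hc : 0 < c := Nat.pos_of_ne_zero fun hc => hN1 (by simp [hNG, hc])
  have hS : Odd (F * c * m * m' + m + m') := by
    rw [← Nat.not_even_iff_odd]
    rintro ⟨k, hk⟩
    exact hG2 ⟨k, by rw [hNG, hk]; ring⟩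
  obtain ⟨h, hh⟩ := Nat.even_mul_of_odd_mul_mul_add_add (hFeven.mul_right c) hS
  rw [← two_mul] at hh
  have hR : c * (F * c * m * m' + m + m') = 2 * F * q + r := by
    refine Nat.eq_of_mul_eq_mul_left hF ?_
    rw [← hqr, ← hFR, hNG]
    ring
  have hlt : c ^ 2 * (m * m') < 2 * F := by
    have hN2 : N < 2 * F ^ 3 := by exact_mod_cast (by linarith : (N : ℚ) < 2 * F ^ 3)
    refine Nat.lt_of_mul_lt_mul_left (a := F ^ 2) ?_
    calc F ^ 2 * (c ^ 2 * (m * m')) = (F * c * m) * (F * c * m') := by ring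
      _ < (F * c * m + 1) * (F * c * m' + 1) := Nat.mul_lt_mul'' (lt_add_one _) (lt_add_one _)
      _ = N := hNmm.symm
      _ < F ^ 2 * (2 * F) := by linarith
  obtain ⟨rfl, rfl⟩ := Nat.quot_rem_of_mul_mul_add_add_eq hc hm hm' hh hlt hR hr2
  refine hsq.elim (fun hq => ?_) fun hns => hns ⟨c * ((m : ℤ) - m'), ?_⟩
  · have : 0 < h := by have := Nat.mul_pos hm hm'; omega
    exact (by positivity : 0 < c ^ 2 * h).ne' hq
  · have hh' : (m : ℤ) * m' = 2 * h := by exact_mod_cast hh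
    push_cast
    linear_combination (-4 * (c : ℤ) ^ 2) * hh'

theorem stmt_13 (N F R q r : ℕ) (hN : 1 < N) (hodd : Odd N)
    (hFR : N - 1 = F * R) (hFeven : Even F)
    (hF3 : ((F : ℚ)) ^ 3 > (N : ℚ) / 2)
    (hdiv : ∀ p : ℕ, p.Prime → p ∣ F →
      ∃ a : ℤ, a ^ (N - 1) ≡ 1 [ZMOD (N : ℤ)] ∧
        Int.gcd (a ^ ((N - 1) / p) - 1) (N : ℤ) = 1)
    (hqr : R = 2 * F * q + r) (hr1 : 1 ≤ r) (hr2 : r < 2 * F)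
    (hsq : q = 0 ∨ ¬ ∃ s : ℤ, s ^ 2 = (r : ℤ) ^ 2 - 8 * q) :
    N.Prime :=
  stmt_13_general N F R q r hN hFR hFeven hF3 hdiv hqr hr2 hsq
end

section
/- Let N > 1 be odd and F an even divisor of N − 1 such that for each prime p dividing F there is an integer a with a^(N−1) ≡ 1 (mod N) and gcd(a^((N−1)/p) − 1, N) = 1. Then every prime divisor q of N satisfies q ≡ 1 (mod F). -/
/-!
Let `q` be a prime factor of `N` and `p` a prime factor of `F` with witness `a`. In `ZMod q`,
`a ^ (N - 1) = 1` while `a ^ ((N - 1) / p) ≠ 1`, since `q` divides `N` but not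
`a ^ ((N - 1) / p) - 1`. Hence the full power of `p` dividing `N - 1` divides the order of `a`
in `ZMod q`, and so divides `q - 1`. Running over all primes `p ∣ F` gives `F ∣ q - 1`.
-/

open Nat

theorem ordProj_dvd_orderOf_of_pow_div_ne_one {M : Type*} [Monoid M] {x : M} {n p : ℕ}
    (hp : p.Prime) (hx : x ^ n = 1) (hxp : x ^ (n / p) ≠ 1) :
    ordProj[p] n ∣ orderOf x := by
  have := Fact.mk hp
  rcases hk : n.factorization p with _ | j
  · simp
  set m := ordCompl[p] n
  have hn : n = p ^ (j + 1) * m := by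
    rw [← hk]
    exact (ordProj_mul_ordCompl_eq_self n p).symm
  have hnp : n / p = p ^ j * m := by
    rw [hn, pow_succ', mul_assoc, Nat.mul_div_cancel_left _ hp.pos]
  have horder : orderOf (x ^ m) = p ^ (j + 1) := by
    apply orderOf_eq_prime_pow
    · rwa [← pow_mul, mul_comm, ← hnp]
    · rw [← pow_mul, mul_comm, ← hn, hx]
  rw [← horder]
  exact orderOf_pow_dvd m

theorem ordProj_sub_one_dvd_sub_one_of_prime_dvd {N q p : ℕ} {a : ℤ} (hq : q.Prime)
    (hqN : q ∣ N) (hp : p.Prime) (ha : a ^ (N - 1) ≡ 1 [ZMOD N])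
    (hgcd : Int.gcd (a ^ ((N - 1) / p) - 1) N = 1) :
    ordProj[p] (N - 1) ∣ q - 1 := by
  have := Fact.mk hq
  have hqN' : (q : ℤ) ∣ N := Int.natCast_dvd_natCast.mpr hqN
  have hpow : (a : ZMod q) ^ (N - 1) = 1 := by
    exact_mod_cast (ZMod.intCast_eq_intCast_iff _ _ _).mpr (ha.of_dvd hqN')
  have hpow_div : (a : ZMod q) ^ ((N - 1) / p) ≠ 1 := by
    intro h
    have hdvd : (q : ℤ) ∣ a ^ ((N - 1) / p) - 1 := by
      rw [← ZMod.intCast_zmod_eq_zero_iff_dvd]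
      push_cast
      rw [h, sub_self]
    have hq1 := Int.dvd_coe_gcd hdvd hqN'
    rw [hgcd] at hq1
    exact hq.not_dvd_one (Int.natCast_dvd_natCast.mp hq1)
  have hne : (a : ZMod q) ≠ 0 := by
    intro h
    rw [h, zero_pow_eq_one₀] at hpow
    rw [h, hpow, Nat.zero_div, pow_zero] at hpow_div
    exact hpow_div rfl
  exact (ordProj_dvd_orderOf_of_pow_div_ne_one hp hpow hpow_div).trans
    (ZMod.orderOf_dvd_card_sub_one hne)

theorem stmt_14_general (N F : ℕ) (hN : 1 < N)
    (hF : F ∣ N - 1)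
    (hdiv : ∀ p : ℕ, p.Prime → p ∣ F →
      ∃ a : ℤ, a ^ (N - 1) ≡ 1 [ZMOD (N : ℤ)] ∧
        Int.gcd (a ^ ((N - 1) / p) - 1) (N : ℤ) = 1) :
    ∀ q : ℕ, q.Prime → q ∣ N → q ≡ 1 [MOD F] := by
  intro q hq hqN
  suffices F ∣ q - 1 from ((Nat.modEq_iff_dvd' hq.one_le).mpr this).symm
  refine (dvd_iff_prime_pow_dvd_dvd (q - 1) F).mpr fun p k hp hpkF => ?_
  rcases k.eq_zero_or_pos with rfl | hk
  · simp
  obtain ⟨a, ha, hgcd⟩ := hdiv p hp ((dvd_pow_self p hk.ne').trans hpkF)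
  have hpkN : p ^ k ∣ ordProj[p] (N - 1) :=
    (hp.pow_dvd_iff_dvd_ordProj (by omega)).mp (hpkF.trans hF)
  exact hpkN.trans (ordProj_sub_one_dvd_sub_one_of_prime_dvd hq hqN hp ha hgcd)

theorem stmt_14 (N F : ℕ) (hN : 1 < N) (hodd : Odd N) (hFeven : Even F)
    (hF : F ∣ N - 1)
    (hdiv : ∀ p : ℕ, p.Prime → p ∣ F →
      ∃ a : ℤ, a ^ (N - 1) ≡ 1 [ZMOD (N : ℤ)] ∧
        Int.gcd (a ^ ((N - 1) / p) - 1) (N : ℤ) = 1) :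
    ∀ q : ℕ, q.Prime → q ∣ N → q ≡ 1 [MOD F] :=
  stmt_14_general N F hN hF hdiv
end

section
/- If k and n are positive integers with 43 ≤ n, 43 does not divide k, and x = k·(n#/43) where n# denotes the product of all primes ≤ n, then for every prime p ≤ n with p ≠ 43, f(g(x)) is not divisible by p, where f(x) = x² + x + 41 and g(x) = 40x³ + 41x² + 42x + 1. -/
theorem Nat.Prime.dvd_primorial_div {p q n : ℕ} (hp : p.Prime) (hq : q.Prime) (hpq : p ≠ q)
    (hpn : p ≤ n) (hqn : q ≤ n) : p ∣ primorial n / q := by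
  have hcop : q.Coprime p := (Nat.coprime_primes hq hp).mpr hpq.symm
  exact Nat.dvd_div_of_mul_dvd <| hcop.mul_dvd_of_dvd_of_dvd
    (hq.dvd_primorial_iff.mpr hqn) (hp.dvd_primorial_iff.mpr hpn)

/-- Since `g 0 = 1` and `f 1 = 43`, the composite `f ∘ g` is congruent to `43` modulo `x`. -/
theorem dvd_sq_add_add_sub_43 {R : Type*} [CommRing R] (x : R) :
    x ∣ (40 * x ^ 3 + 41 * x ^ 2 + 42 * x + 1) ^ 2 + (40 * x ^ 3 + 41 * x ^ 2 + 42 * x + 1) + 41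
      - 43 :=
  ⟨(40 * x ^ 2 + 41 * x + 42) * (40 * x ^ 3 + 41 * x ^ 2 + 42 * x + 3), by ring⟩

theorem stmt_19_general (k n : ℕ) (hn : 43 ≤ n)
    (x : ℤ) (hx : x = (k : ℤ) * ((primorial n : ℤ) / 43)) :
    ∀ p : ℕ, p.Prime → p ≤ n → p ≠ 43 →
      ¬ (p : ℤ) ∣ ((40 * x ^ 3 + 41 * x ^ 2 + 42 * x + 1) ^ 2 +
          (40 * x ^ 3 + 41 * x ^ 2 + 42 * x + 1) + 41) := by
  intro p hp hpn hp43 hdvd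
  have h43 : Nat.Prime 43 := by norm_num
  have hpx : (p : ℤ) ∣ x := by
    rw [hx, show (43 : ℤ) = ((43 : ℕ) : ℤ) from rfl, ← Int.natCast_div]
    exact dvd_mul_of_dvd_right
      (Int.natCast_dvd_natCast.mpr (hp.dvd_primorial_div h43 hp43 hpn hn)) _
  have hp_dvd_43 : (p : ℤ) ∣ 43 := by
    simpa using dvd_sub hdvd (hpx.trans (dvd_sq_add_add_sub_43 x))
  exact hp43 ((Nat.prime_dvd_prime_iff_eq hp h43).mp (by exact_mod_cast hp_dvd_43))

theorem stmt_19 (k n : ℕ) (hk : 0 < k) (hn : 43 ≤ n) (h43 : ¬ 43 ∣ k)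
    (x : ℤ) (hx : x = (k : ℤ) * ((primorial n : ℤ) / 43)) :
    ∀ p : ℕ, p.Prime → p ≤ n → p ≠ 43 →
      ¬ (p : ℤ) ∣ ((40 * x ^ 3 + 41 * x ^ 2 + 42 * x + 1) ^ 2 +
          (40 * x ^ 3 + 41 * x ^ 2 + 42 * x + 1) + 41) :=
  stmt_19_general k n hn x hx
end
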